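/- Let X, Y, Z, and S be pairwise disjoint node sets in an MPDAG G with Z ∩ PossDe(X,G) = ∅. Then S satisfies the conditional adjustment criterion relative to (X,Y,Z) in G if and only if S ∪ Z satisfies the adjustment criterion relative to (X,Y) in G. -/

import Mathlib

open MeasureTheory
open scoped ENNReal

namespace CondAdj

/-- Edge marks of a (partial) mixed graph.  `Mark.none` means "no edge". -/
inductive Mark : Type
  | none
  | tail
  | arrow
  | circle
  deriving DecidableEq

/-- A marked graph on node type `V`:  `m a b` is the edge mark at `b` of the edge
between `a` and `b` (`Mark.none` iff `a` and `b` are not adjacent).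
A directed edge `a → b` has a tail at `a` and an arrowhead at `b`;
an undirected edge `a − b` (resp. `a ∘-∘ b`) has tails (resp. circles) at both ends;
a bidirected edge `a ↔ b` has arrowheads at both ends. -/
structure MG (V : Type) where
  m : V → V → Mark
  none_symm : ∀ a b, m a b = Mark.none ↔ m b a = Mark.none
  irrefl : ∀ a, m a a = Mark.none

namespace MG

variable {V : Type}

/-- `a` and `b` are adjacent. -/
def Adj (G : MG V) (a b : V) : Prop := G.m a b ≠ Mark.none

/-- Directed edge `a → b`. -/
def DirE (G : MG V) (a b : V) : Prop := G.m a b = Mark.arrow ∧ G.m b a = Mark.tail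

/-- Bidirected edge `a ↔ b`. -/
def BidirE (G : MG V) (a b : V) : Prop := G.m a b = Mark.arrow ∧ G.m b a = Mark.arrow

/-- Undirected edge (`a − b` or `a ∘-∘ b`). -/
def UndirE (G : MG V) (a b : V) : Prop :=
  (G.m a b = Mark.tail ∧ G.m b a = Mark.tail) ∨
    (G.m a b = Mark.circle ∧ G.m b a = Mark.circle)

/-- Edge with an arrowhead at `b` (i.e. `a *→ b`). -/
def IntoE (G : MG V) (a b : V) : Prop := G.m a b = Mark.arrow

/-- `b` is a descendant of `a` (via a directed path, possibly of length 0). -/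
def Desc (G : MG V) (a b : V) : Prop := Relation.ReflTransGen G.DirE a b

/-- Descendants of a set of nodes. -/
def De (G : MG V) (A : Set V) : Set V := {b | ∃ a ∈ A, G.Desc a b}

/-- Ancestors of a set of nodes. -/
def An (G : MG V) (A : Set V) : Set V := {a | ∃ b ∈ A, G.Desc a b}

/-- `p 0, …, p n` is a path in `G` (distinct nodes, consecutive ones adjacent). -/
def IsPath (G : MG V) (p : ℕ → V) (n : ℕ) : Prop :=
  1 ≤ n ∧ (∀ i ≤ n, ∀ j ≤ n, p i = p j → i = j) ∧ ∀ i < n, G.Adj (p i) (p (i + 1))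

/-- A path from `X` to `Y`. -/
def IsPathFromTo (G : MG V) (p : ℕ → V) (n : ℕ) (X Y : Set V) : Prop :=
  G.IsPath p n ∧ p 0 ∈ X ∧ p n ∈ Y

/-- A possibly causal (possibly directed) path: no arrowhead pointing backwards,
i.e. there is no edge `p i ←* p j` for `i < j`. -/
def PossCausal (G : MG V) (p : ℕ → V) (n : ℕ) : Prop :=
  ∀ i j, i < j → j ≤ n → ¬ G.IntoE (p j) (p i)

/-- A causal (directed) path. -/
def Causal (G : MG V) (p : ℕ → V) (n : ℕ) : Prop := ∀ i < n, G.DirE (p i) (p (i + 1))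

/-- The non-endpoint node at position `i` of `p` is a collider. -/
def ColliderAt (G : MG V) (p : ℕ → V) (i : ℕ) : Prop :=
  G.IntoE (p (i - 1)) (p i) ∧ G.IntoE (p (i + 1)) (p i)

/-- The non-endpoint node at position `i` of `p` is a definite non-collider. -/
def DefNonColliderAt (G : MG V) (p : ℕ → V) (i : ℕ) : Prop :=
  G.DirE (p i) (p (i - 1)) ∨ G.DirE (p i) (p (i + 1)) ∨
    (G.UndirE (p (i - 1)) (p i) ∧ G.UndirE (p i) (p (i + 1)) ∧
      ¬ G.Adj (p (i - 1)) (p (i + 1)))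

/-- A definite status path. -/
def DefStatus (G : MG V) (p : ℕ → V) (n : ℕ) : Prop :=
  ∀ i, 1 ≤ i → i < n → G.ColliderAt p i ∨ G.DefNonColliderAt p i

/-- The set `W` blocks the path `p`: some non-collider on `p` is in `W`, or some
collider on `p` has no descendant in `W`. -/
def Blocks (G : MG V) (W : Set V) (p : ℕ → V) (n : ℕ) : Prop :=
  ∃ i, 1 ≤ i ∧ i < n ∧
    ((¬ G.ColliderAt p i ∧ p i ∈ W) ∨
      (G.ColliderAt p i ∧ ∀ d, G.Desc (p i) d → d ∉ W))

/-- Possible descendants (via possibly causal paths; every node is its own). -/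
def PossDe (G : MG V) (A : Set V) : Set V :=
  A ∪ {b | ∃ a ∈ A, ∃ p n, G.IsPath p n ∧ G.PossCausal p n ∧ p 0 = a ∧ p n = b}

/-- Possible ancestors (via possibly causal paths; every node is its own). -/
def PossAn (G : MG V) (A : Set V) : Set V :=
  A ∪ {a | ∃ b ∈ A, ∃ p n, G.IsPath p n ∧ G.PossCausal p n ∧ p 0 = a ∧ p n = b}

end MG

variable {V : Type}

/-- The path `p` is proper w.r.t. `X`: only its first node is in `X`. -/
def Proper (p : ℕ → V) (n : ℕ) (X : Set V) : Prop :=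
  ∀ i, 1 ≤ i → i ≤ n → p i ∉ X

namespace MG

variable {V : Type}

/-- Possible mediators: the nodes other than those in `X` lying on proper possibly
causal paths from `X` to `Y`. -/
def PossMed (G : MG V) (X Y : Set V) : Set V :=
  {w | ∃ p n, G.IsPathFromTo p n X Y ∧ Proper p n X ∧ G.PossCausal p n ∧
      ∃ i, 1 ≤ i ∧ i ≤ n ∧ p i = w}

/-- The forbidden set: possible descendants of the possible mediators. -/
def Forb (G : MG V) (X Y : Set V) : Set V := G.PossDe (G.PossMed X Y)

/-- Mediators: the nodes other than those in `X` lying on proper causal paths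
from `X` to `Y`. -/
def Med (G : MG V) (X Y : Set V) : Set V :=
  {w | ∃ p n, G.IsPathFromTo p n X Y ∧ Proper p n X ∧ G.Causal p n ∧
      ∃ i, 1 ≤ i ∧ i ≤ n ∧ p i = w}

/-- The forbidden set of a DAG: descendants of the mediators. -/
def ForbD (G : MG V) (X Y : Set V) : Set V := G.De (G.Med X Y)

/-- Parents of a node. -/
def Pa (G : MG V) (b : V) : Set V := {a | G.DirE a b}

/-- Parents of a set of nodes:  `(⋃ w ∈ W, Pa w) \ W`. -/
def PaSet (G : MG V) (W : Set V) : Set V := {a | ∃ w ∈ W, G.DirE a w} \ W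

/-- No directed cycles. -/
def Acyclic (G : MG V) : Prop := ∀ a, ¬ Relation.TransGen G.DirE a a

/-- A DAG: all edges directed, no directed cycles. -/
def IsDAG (G : MG V) : Prop :=
  (∀ a b, G.Adj a b → G.DirE a b ∨ G.DirE b a) ∧ G.Acyclic

/-- A partially directed acyclic graph: edges are `→` or `−`, no directed cycles. -/
def IsPDG (G : MG V) : Prop :=
  (∀ a b, G.Adj a b →
      G.DirE a b ∨ G.DirE b a ∨ (G.m a b = Mark.tail ∧ G.m b a = Mark.tail)) ∧
    G.Acyclic

/-- `a → b ← c` is an unshielded collider. -/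
def UnshieldedCollider (G : MG V) (a b c : V) : Prop :=
  G.DirE a b ∧ G.DirE c b ∧ a ≠ c ∧ ¬ G.Adj a c

/-- The class `[G]` of DAGs represented by a partially directed graph `G`: the DAGs
with the same nodes, adjacencies and unshielded colliders as `G` in which every
directed edge of `G` is directed the same way. -/
def rep (G : MG V) : Set (MG V) :=
  {D | D.IsDAG ∧ (∀ a b, D.Adj a b ↔ G.Adj a b) ∧ (∀ a b, G.DirE a b → D.DirE a b) ∧
      ∀ a b c, (D.UnshieldedCollider a b c ↔ G.UnshieldedCollider a b c)}

/-- A maximally oriented PDAG (MPDAG): a PDAG, representing a nonempty class of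
DAGs, whose orientations are complete (every undirected edge is oriented both
ways by DAGs in the represented class). -/
def IsMPDAG (G : MG V) : Prop :=
  G.IsPDG ∧ G.rep.Nonempty ∧
    ∀ a b, G.UndirE a b → (∃ D ∈ G.rep, D.DirE a b) ∧ ∃ D ∈ G.rep, D.DirE b a

end MG

section Density

variable {V : Type} [Fintype V] [DecidableEq V]

/-- Override the coordinates of `v` in `A` by the values `w`. -/
noncomputable def override (v : V → ℝ) (A : Finset V) (w : {x : V // x ∈ A} → ℝ) :
    V → ℝ :=
  fun i => if h : i ∈ A then w ⟨i, h⟩ else v i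

/-- The marginal density of the coordinates in `A` (integrating out `Aᶜ`). -/
noncomputable def marg (f : (V → ℝ) → ℝ≥0∞) (A : Finset V) (v : V → ℝ) : ℝ≥0∞ :=
  ∫⁻ w : {x : V // x ∈ Aᶜ} → ℝ, f (override v Aᶜ w)

/-- The conditional density `f(a | b)` of the coordinates in `A` given those in `B`. -/
noncomputable def condD (f : (V → ℝ) → ℝ≥0∞) (A B : Finset V) (v : V → ℝ) : ℝ≥0∞ :=
  marg f (A ∪ B) v / marg f B v

/-- A (strictly positive) joint density on `V → ℝ`. -/
def IsDensity (f : (V → ℝ) → ℝ≥0∞) : Prop :=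
  Measurable f ∧ (∫⁻ v : V → ℝ, f v) = 1 ∧ ∀ v, f v ≠ 0 ∧ f v ≠ ⊤

/-- A family of interventional densities: `obs` is the observational density
`f(v)`, and `int X x` is the interventional density `f(v | do(X = x))`. -/
structure IntFamily (V : Type) [Fintype V] [DecidableEq V] where
  obs : (V → ℝ) → ℝ≥0∞
  int : Finset V → (V → ℝ) → (V → ℝ) → ℝ≥0∞

-- Parents of a node, as a finset.
open Classical in
noncomputable def paFin (G : MG V) (i : V) : Finset V :=
  Finset.univ.filter fun j => G.DirE j i

-- The family `F` is consistent with the causal DAG `G` (i.e. `G` is a causal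
-- Bayesian network compatible with `F`): every interventional density satisfies
-- the truncated factorization.
open Classical in
def Consistent (F : IntFamily V) (G : MG V) : Prop :=
  (∀ x, F.int ∅ x = F.obs) ∧
    ∀ (X : Finset V) (x v : V → ℝ),
      F.int X x v =
        if ∀ i ∈ X, v i = x i then
          ∏ i ∈ Xᶜ, condD F.obs {i} (paFin G i) v
        else 0

/-- The conditional interventional density `f(a | do(x), z)` (where the value of
the intervention `do(X = x)` is read off from `v`). -/
noncomputable def doCond (F : IntFamily V) (X A Z : Finset V) (v : V → ℝ) : ℝ≥0∞ :=
  marg (F.int X v) (A ∪ Z ∪ X) v / marg (F.int X v) (Z ∪ X) v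

/-- The conditional adjustment functional
`∫ f(y | x, z, s) f(s | z) ds`  (resp. `f(y | x, z)` if `S = ∅`). -/
noncomputable def adjRHS (f : (V → ℝ) → ℝ≥0∞) (X Y Z S : Finset V) (v : V → ℝ) :
    ℝ≥0∞ :=
  if S = ∅ then condD f Y (X ∪ Z) v
  else
    ∫⁻ w : {x : V // x ∈ S} → ℝ,
      condD f Y (X ∪ Z ∪ S) (override v S w) * condD f S Z (override v S w)

/-- `S` is a conditional adjustment set relative to `(X, Y, Z)` in the causal
MPDAG `G`: for every density consistent with `G` (i.e. with every DAG in `[G]`),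
`f(y | do(x), z)` is given by the conditional adjustment functional. -/
def CondAdjSet (G : MG V) (X Y Z S : Finset V) : Prop :=
  ∀ F : IntFamily V, IsDensity F.obs → (∀ D ∈ G.rep, Consistent F D) →
    ∀ v : V → ℝ, doCond F X Y Z v = adjRHS F.obs X Y Z S v

/-- `S` is a conditional adjustment set relative to `(X, Y, Z)` in the causal DAG `D`. -/
def CondAdjSetDAG (D : MG V) (X Y Z S : Finset V) : Prop :=
  ∀ F : IntFamily V, IsDensity F.obs → Consistent F D →
    ∀ v : V → ℝ, doCond F X Y Z v = adjRHS F.obs X Y Z S v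

/-- `W` is an (unconditional) adjustment set relative to `(X, Y)` in the causal MPDAG `G`. -/
def AdjSet (G : MG V) (X Y W : Finset V) : Prop :=
  ∀ F : IntFamily V, IsDensity F.obs → (∀ D ∈ G.rep, Consistent F D) →
    ∀ v : V → ℝ, doCond F X Y ∅ v = adjRHS F.obs X Y ∅ W v

end Density

section Criteria

variable {V : Type}

/-- Every proper possibly causal path from `X` to `Y` in `G` starts with a
directed edge out of `X`. -/
def StartsDirected (G : MG V) (X Y : Set V) : Prop :=
  ∀ p n, G.IsPathFromTo p n X Y → Proper p n X → G.PossCausal p n → G.DirE (p 0) (p 1)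

/-- `W` blocks all proper non-causal definite status paths from `X` to `Y` in `G`. -/
def BlocksNonCausal (G : MG V) (X Y W : Set V) : Prop :=
  ∀ p n, G.IsPathFromTo p n X Y → Proper p n X → ¬ G.PossCausal p n →
    G.DefStatus p n → G.Blocks W p n

/-- The conditional adjustment criterion relative to `(X, Y, Z)` in an MPDAG. -/
def CondAdjCrit (G : MG V) (X Y Z S : Set V) : Prop :=
  StartsDirected G X Y ∧ S ∩ G.Forb X Y = ∅ ∧ BlocksNonCausal G X Y (S ∪ Z)

/-- The (unconditional) adjustment criterion relative to `(X, Y)` in an MPDAG. -/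
def AdjCrit (G : MG V) (X Y W : Set V) : Prop :=
  StartsDirected G X Y ∧ W ∩ G.Forb X Y = ∅ ∧ BlocksNonCausal G X Y W

/-- `W` blocks all proper non-causal paths from `X` to `Y` in a DAG. -/
def BlocksNonCausalD (G : MG V) (X Y W : Set V) : Prop :=
  ∀ p n, G.IsPathFromTo p n X Y → Proper p n X → ¬ G.Causal p n → G.Blocks W p n

/-- The conditional adjustment criterion relative to `(X, Y, Z)` in a DAG. -/
def CondAdjCritDAG (G : MG V) (X Y Z S : Set V) : Prop :=
  S ∩ G.ForbD X Y = ∅ ∧ BlocksNonCausalD G X Y (S ∪ Z)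

end Criteria

/-- A set, regarded as a finset (the node type is finite). -/
noncomputable def setFin {V : Type} [Fintype V] (s : Set V) : Finset V :=
  s.toFinite.toFinset

end CondAdj

theorem test_dummy : True := trivial

/-!
Only the forbidden-set conditions of the two criteria differ, and the extra requirement
`Z ∩ Forb(X, Y, G) = ∅` follows from `Z ∩ PossDe(X, G) = ∅` because, once every proper possibly
causal path from `X` to `Y` starts with a directed edge, `Forb(X, Y, G) ⊆ PossDe(X, G)`.

Indeed, let `p₀ → p₁ ⋯ pₙ` be such a path. By Meek's rule R1, a directed path `p₀ →⁺ pₜ`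
followed by an undirected edge `pₜ − pₜ₊₁` gives `p₀ →⁺ pₜ₊₁` or `p₀ − pₜ₊₁`; the latter would
yield the proper possibly causal path `p₀ − pₜ₊₁ ⋯ pₙ`. So `p₀ →⁺ pᵢ` for all `i ≥ 1`. Finally
possible descendants are inherited backwards along directed edges, because in an MPDAG a
possibly causal path `a ⋯ b` can never be closed by a directed path `b →⁺ a`: shortcut shielded
triples, and orient the remaining unshielded path in a DAG of `[G]`, where it becomes directed.
-/

namespace CondAdj

namespace MG

variable {V : Type} {G : MG V}

lemma DirE.ne {a b : V} (h : G.DirE a b) : a ≠ b := by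
  rintro rfl
  simpa [G.irrefl] using h.1

lemma DirE.adj {a b : V} (h : G.DirE a b) : G.Adj a b := by
  simp [Adj, h.1]

lemma DirE.not_intoE_symm {a b : V} (h : G.DirE a b) : ¬ G.IntoE b a := by
  simp [IntoE, h.2]

lemma UndirE.symm {a b : V} (h : G.UndirE a b) : G.UndirE b a := by
  rcases h with h | h
  exacts [Or.inl h.symm, Or.inr h.symm]

lemma UndirE.not_intoE {a b : V} (h : G.UndirE a b) : ¬ G.IntoE a b := by
  rcases h with h | h <;> simp [IntoE, h.1]

lemma UndirE.adj {a b : V} (h : G.UndirE a b) : G.Adj a b := by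
  rcases h with h | h <;> simp [Adj, h.1]

lemma IsPath.comp {p : ℕ → V} {n m : ℕ} {f : ℕ → ℕ} (hp : G.IsPath p n) (hf : StrictMono f)
    (hm : 1 ≤ m) (hfm : f m ≤ n) (hadj : ∀ i < m, G.Adj (p (f i)) (p (f (i + 1)))) :
    G.IsPath (p ∘ f) m := by
  refine ⟨hm, fun i hi j hj hij => hf.injective ?_, hadj⟩
  exact hp.2.1 _ ((hf.monotone hi).trans hfm) _ ((hf.monotone hj).trans hfm) hij

lemma PossCausal.comp {p : ℕ → V} {n m : ℕ} {f : ℕ → ℕ} (hp : G.PossCausal p n)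
    (hf : StrictMono f) (hfm : f m ≤ n) : G.PossCausal (p ∘ f) m :=
  fun _ _ hij hj => hp _ _ (hf hij) ((hf.monotone hj).trans hfm)

lemma IsPath.prefix {p : ℕ → V} {n m : ℕ} (hp : G.IsPath p n) (hm : 1 ≤ m) (hmn : m ≤ n) :
    G.IsPath p m :=
  ⟨hm, fun i hi j hj => hp.2.1 i (by omega) j (by omega), fun i hi => hp.2.2 i (by omega)⟩

lemma PossCausal.prefix {p : ℕ → V} {n m : ℕ} (hp : G.PossCausal p n) (hmn : m ≤ n) :
    G.PossCausal p m :=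
  fun i j hij hj => hp i j hij (hj.trans hmn)

def consPath (a : V) (q : ℕ → V) : ℕ → V
  | 0 => a
  | t + 1 => q t

lemma IsPath.consPath {q : ℕ → V} {l : ℕ} {a : V} (hq : G.IsPath q l) (ha : G.Adj a (q 0))
    (hne : ∀ s ≤ l, q s ≠ a) : G.IsPath (consPath a q) (l + 1) := by
  refine ⟨by omega, ?_, ?_⟩
  · rintro (_ | i) hi (_ | j) hj hij
    · rfl
    · exact absurd hij.symm (hne j (by omega))
    · exact absurd hij (hne i (by omega))
    · simpa using hq.2.1 i (by omega) j (by omega) hij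
  · rintro (_ | i) hi
    exacts [ha, hq.2.2 i (by omega)]

lemma PossCausal.consPath {q : ℕ → V} {l : ℕ} {a : V} (hq : G.PossCausal q l)
    (hback : ∀ s ≤ l, ¬ G.IntoE (q s) a) : G.PossCausal (consPath a q) (l + 1) := by
  rintro (_ | i) (_ | j) hij hj
  · omega
  · exact hback j (by omega)
  · omega
  · exact hq i j (by omega) (by omega)

lemma DirE.isPath_possCausal_consPath {a b : V} (h : G.DirE a b) :
    G.IsPath (consPath a fun _ => b) 1 ∧ G.PossCausal (consPath a fun _ => b) 1 := by
  refine ⟨⟨le_rfl, ?_, ?_⟩, ?_⟩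
  · rintro (_ | _ | i) hi (_ | _ | j) hj hij <;>
      first | omega | exact absurd hij h.ne | exact absurd hij.symm h.ne
  · rintro (_ | i) hi
    exacts [h.adj, by omega]
  · rintro (_ | i) (_ | _ | j) hij hj <;> first | omega | exact h.not_intoE_symm

lemma IsMPDAG.adj_cases (hG : G.IsMPDAG) {a b : V} (h : G.Adj a b) :
    G.DirE a b ∨ G.DirE b a ∨ G.UndirE a b := by
  rcases hG.1.1 a b h with h | h | h
  exacts [Or.inl h, Or.inr (Or.inl h), Or.inr (Or.inr (Or.inl h))]

lemma IsMPDAG.dirE_of_intoE (hG : G.IsMPDAG) {a b : V} (h : G.IntoE a b) : G.DirE a b := by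
  have hadj : G.Adj a b := by simp [Adj, show G.m a b = Mark.arrow from h]
  rcases hG.adj_cases hadj with h' | h' | h'
  exacts [h', absurd h h'.not_intoE_symm, absurd h h'.not_intoE]

lemma IsMPDAG.dirE_or_undirE_of_possCausal (hG : G.IsMPDAG) {p : ℕ → V} {n j : ℕ}
    (hp : G.IsPath p n) (hpc : G.PossCausal p n) (hj : j < n) :
    G.DirE (p j) (p (j + 1)) ∨ G.UndirE (p j) (p (j + 1)) := by
  rcases hG.adj_cases (hp.2.2 j hj) with h | h | h
  exacts [Or.inl h, absurd h.1 (hpc j (j + 1) (by omega) hj), Or.inr h]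

lemma transGen_dirE_of_mem_rep {D : MG V} (hD : D ∈ G.rep) {a b : V}
    (h : Relation.TransGen G.DirE a b) : Relation.TransGen D.DirE a b :=
  Relation.TransGen.mono (fun _ _ => hD.2.2.1 _ _) _ _ h

/-- Meek's rule R1, and acyclicity of the DAGs in `[G]`. -/
lemma IsMPDAG.adj_and_not_dirE_of_dirE_undirE (hG : G.IsMPDAG) {a b c : V} (hab : G.DirE a b)
    (hbc : G.UndirE b c) (hac : a ≠ c) : G.Adj a c ∧ ¬ G.DirE c a := by
  constructor
  · by_contra hna
    obtain ⟨D, hD, hcb⟩ := (hG.2.2 b c hbc).2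
    have hG_coll := (hD.2.2.2 a b c).1
      ⟨hD.2.2.1 a b hab, hcb, hac, fun h => hna ((hD.2.1 a c).1 h)⟩
    exact hbc.symm.not_intoE hG_coll.2.1.1
  · intro hca
    obtain ⟨D, hD, hbc'⟩ := (hG.2.2 b c hbc).1
    exact hD.1.2 a (((Relation.TransGen.single (hD.2.2.1 a b hab)).tail hbc').tail
      (hD.2.2.1 c a hca))

lemma IsMPDAG.dirE_or_undirE_of_dirE_undirE (hG : G.IsMPDAG) {a b c : V} (hab : G.DirE a b)
    (hbc : G.UndirE b c) : G.DirE a c ∨ G.UndirE a c := by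
  have hac : a ≠ c := by
    rintro rfl
    exact hbc.symm.not_intoE hab.1
  obtain ⟨hadj, hca⟩ := hG.adj_and_not_dirE_of_dirE_undirE hab hbc hac
  rcases hG.adj_cases hadj with h | h | h
  exacts [Or.inl h, absurd h hca, Or.inr h]

lemma IsMPDAG.transGen_or_undirE_of_transGen_undirE (hG : G.IsMPDAG) {a b c : V}
    (hab : Relation.TransGen G.DirE a b) (hbc : G.UndirE b c) :
    Relation.TransGen G.DirE a c ∨ G.UndirE a c := by
  induction hab using Relation.TransGen.head_induction_on with
  | single h => exact (hG.dirE_or_undirE_of_dirE_undirE h hbc).imp_left .single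
  | head h _ ih =>
    rcases ih with ih | ih
    · exact Or.inl (ih.head h)
    · exact (hG.dirE_or_undirE_of_dirE_undirE h ih).imp_left .single

/-- A reversed edge would create an unshielded collider in `D`, which `G` would then share. -/
lemma dirE_of_mem_rep_of_unshielded {D : MG V} (hD : D ∈ G.rep) {p : ℕ → V} {n : ℕ}
    (hp : G.IsPath p n) (hpc : G.PossCausal p n)
    (hsh : ∀ j, j + 2 ≤ n → ¬ G.Adj (p j) (p (j + 2))) (h01 : D.DirE (p 0) (p 1)) :
    ∀ j < n, D.DirE (p j) (p (j + 1)) := by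
  intro j
  induction j with
  | zero => exact fun _ => h01
  | succ t ih =>
    intro hlt
    rcases hD.1.1 _ _ ((hD.2.1 _ _).2 (hp.2.2 (t + 1) hlt)) with h | h
    · exact h
    · have hne : p t ≠ p (t + 2) := fun e => by
        have := hp.2.1 t (by omega) (t + 2) (by omega) e
        omega
      have hG_coll := (hD.2.2.2 (p t) (p (t + 1)) (p (t + 2))).1
        ⟨ih (by omega), h, hne, fun hadj => hsh t (by omega) ((hD.2.1 _ _).1 hadj)⟩
      exact absurd hG_coll.2.1.1 (hpc (t + 1) (t + 2) (by omega) (by omega))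

lemma IsMPDAG.not_transGen_dirE_of_possCausal (hG : G.IsMPDAG) {p : ℕ → V} {n : ℕ}
    (hp : G.IsPath p n) (hpc : G.PossCausal p n) : ¬ Relation.TransGen G.DirE (p n) (p 0) := by
  induction n using Nat.strong_induction_on generalizing p with
  | _ n IH =>
    intro hcyc
    by_cases hsh : ∃ j, j + 2 ≤ n ∧ G.Adj (p j) (p (j + 2))
    · obtain ⟨j, hj, hadj⟩ := hsh
      set f : ℕ → ℕ := fun t => if t ≤ j then t else t + 1
      have hf : StrictMono f := fun a b hab => by simp only [f]; split_ifs <;> omega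
      have hq : G.IsPath (p ∘ f) (n - 1) := by
        refine hp.comp hf (by omega) (by simp only [f]; split_ifs <;> omega) fun t ht => ?_
        rcases lt_trichotomy t j with h | rfl | h
        · simpa [f, show t + 1 ≤ j by omega, h.le] using hp.2.2 t (by omega)
        · simpa [f] using hadj
        · simpa [f, show ¬ t ≤ j by omega, show ¬ t + 1 ≤ j by omega]
            using hp.2.2 (t + 1) (by omega)
      refine IH (n - 1) (by omega) hq (hpc.comp hf (by simp only [f]; split_ifs <;> omega)) ?_
      simpa [f, show ¬ n - 1 ≤ j by omega, show n - 1 + 1 = n by omega] using hcyc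
    · push Not at hsh
      obtain ⟨D, hD, h01⟩ : ∃ D ∈ G.rep, D.DirE (p 0) (p 1) := by
        rcases hG.dirE_or_undirE_of_possCausal hp hpc hp.1 with h | h
        · obtain ⟨D, hD⟩ := hG.2.1
          exact ⟨D, hD, hD.2.2.1 _ _ h⟩
        · exact (hG.2.2 _ _ h).1
      have hforward := dirE_of_mem_rep_of_unshielded hD hp hpc hsh h01
      have hpath : Relation.TransGen D.DirE (p 0) (p n) :=
        Relation.TransGen.lift p (fun _ _ h => h) _ _ <|
          transGen_of_succ_of_lt (fun i j => D.DirE (p i) (p j))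
            (fun i hi => by simpa using hforward i hi.2) hp.1
      exact hD.1.2 _ (hpath.trans (transGen_dirE_of_mem_rep hD hcyc))

lemma mem_possDe_singleton {a w : V} :
    w ∈ G.PossDe {a} ↔
      w = a ∨ ∃ p n, G.IsPath p n ∧ G.PossCausal p n ∧ p 0 = a ∧ p n = w := by
  simp only [PossDe, Set.mem_union, Set.mem_singleton_iff, Set.mem_ofPred_eq, exists_eq_left]

lemma mem_possDe_iff {A : Set V} {w : V} : w ∈ G.PossDe A ↔ ∃ a ∈ A, w ∈ G.PossDe {a} := by
  simp only [mem_possDe_singleton]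
  simp only [PossDe, Set.mem_union, Set.mem_ofPred_eq]
  aesop

lemma IsMPDAG.possDe_subset_of_dirE (hG : G.IsMPDAG) {a b : V} (hab : G.DirE a b) :
    G.PossDe {b} ⊆ G.PossDe {a} := by
  intro w hw
  rw [mem_possDe_singleton] at hw ⊢
  right
  rcases hw with rfl | ⟨q, l, hq, hqc, rfl, rfl⟩
  · obtain ⟨hpath, hpc⟩ := hab.isPath_possCausal_consPath
    exact ⟨_, 1, hpath, hpc, rfl, rfl⟩
  have hne : ∀ s ≤ l, q s ≠ a := by
    rintro (_ | s) hs rfl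
    exacts [hab.ne rfl, hqc 0 (s + 1) (by omega) hs hab.1]
  have hback : ∀ s ≤ l, ¬ G.IntoE (q s) a := by
    rintro (_ | s) hs hinto
    · exact hab.not_intoE_symm hinto
    · exact hG.not_transGen_dirE_of_possCausal (hq.prefix (by omega) hs) (hqc.prefix hs)
        ((Relation.TransGen.single (hG.dirE_of_intoE hinto)).tail hab)
  exact ⟨_, l + 1, hq.consPath hab.adj hne, hqc.consPath hback, rfl, rfl⟩

lemma IsMPDAG.possDe_subset_of_transGen (hG : G.IsMPDAG) {a b : V}
    (hab : Relation.TransGen G.DirE a b) : G.PossDe {b} ⊆ G.PossDe {a} := by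
  induction hab with
  | single h => exact hG.possDe_subset_of_dirE h
  | tail _ h ih => exact (hG.possDe_subset_of_dirE h).trans ih

end MG

open MG

lemma StartsDirected.transGen_dirE {V : Type} {G : MG V} {X Y : Set V} {p : ℕ → V} {n : ℕ}
    (hG : G.IsMPDAG) (hSD : StartsDirected G X Y) (hpt : G.IsPathFromTo p n X Y)
    (hpr : Proper p n X) (hpc : G.PossCausal p n) :
    ∀ j, 1 ≤ j → j ≤ n → Relation.TransGen G.DirE (p 0) (p j) := by
  intro j
  induction j with
  | zero => omega
  | succ t ih =>
    intro _ hle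
    rcases Nat.eq_zero_or_pos t with rfl | ht
    · exact .single (hSD p n hpt hpr hpc)
    have hdir := ih ht (by omega)
    rcases hG.dirE_or_undirE_of_possCausal hpt.1 hpc (j := t) (by omega) with h | h
    · exact hdir.tail h
    rcases hG.transGen_or_undirE_of_transGen_undirE hdir h with h' | h'
    · exact h'
    set f : ℕ → ℕ := fun s => if s = 0 then 0 else t + s
    have hf : StrictMono f := fun a b hab => by simp only [f]; split_ifs <;> omega
    have hfn : f (n - t) = n := by simp only [f]; split_ifs <;> omega
    have hq : G.IsPath (p ∘ f) (n - t) := by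
      refine hpt.1.comp hf (by omega) hfn.le fun s hs => ?_
      rcases Nat.eq_zero_or_pos s with rfl | hs0
      · simpa [f] using h'.adj
      · simpa [f, hs0.ne', add_assoc] using hpt.1.2.2 (t + s) (by omega)
    have hqpr : Proper (p ∘ f) (n - t) X := fun s hs1 hs2 => by
      simpa [f, show s ≠ 0 by omega] using hpr (t + s) (by omega) (by omega)
    have hstart := hSD (p ∘ f) (n - t)
      ⟨hq, by simpa [f] using hpt.2.1, by simpa [hfn] using hpt.2.2⟩ hqpr (hpc.comp hf hfn.le)
    exact absurd (by simpa [f, IntoE] using hstart.1) h'.not_intoE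

theorem forb_subset_possDe {V : Type} {G : MG V} {X Y : Set V} (hG : G.IsMPDAG)
    (hSD : StartsDirected G X Y) : G.Forb X Y ⊆ G.PossDe X := by
  intro w hw
  obtain ⟨_, ⟨p, n, hpt, hpr, hpc, i, hi1, hin, rfl⟩, hw⟩ := mem_possDe_iff.1 hw
  exact mem_possDe_iff.2
    ⟨p 0, hpt.2.1, hG.possDe_subset_of_transGen (hSD.transGen_dirE hG hpt hpr hpc i hi1 hin) hw⟩

end CondAdj

theorem condAdjCrit_iff_adjCrit_mpdag_general
    {V : Type} (G : CondAdj.MG V) (hG : G.IsMPDAG) (X Y Z S : Set V)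
    (hZ : Z ∩ G.PossDe X = ∅) :
    CondAdj.CondAdjCrit G X Y Z S ↔ CondAdj.AdjCrit G X Y (S ∪ Z) := by
  constructor
  · rintro ⟨hSD, hS, hB⟩
    refine ⟨hSD, ?_, hB⟩
    have hZ' : Z ∩ G.Forb X Y = ∅ := Set.subset_empty_iff.1 <|
      hZ ▸ Set.inter_subset_inter_right Z (CondAdj.forb_subset_possDe hG hSD)
    rw [Set.union_inter_distrib_right, hS, hZ', Set.union_empty]
  · rintro ⟨hSD, hSZ, hB⟩
    exact ⟨hSD, Set.subset_empty_iff.1 <|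
      hSZ ▸ Set.inter_subset_inter_left _ Set.subset_union_left, hB⟩

/-- comparison of adjustment criteria: for pairwise disjoint
node sets `X, Y, Z, S` in an MPDAG `G` with `Z ∩ PossDe(X, G) = ∅`, `S`
satisfies the conditional adjustment criterion relative to `(X, Y, Z)` in `G`
iff `S ∪ Z` satisfies the adjustment criterion relative to `(X, Y)` in `G`. -/
theorem condAdjCrit_iff_adjCrit_mpdag
    {V : Type} (G : CondAdj.MG V) (hG : G.IsMPDAG) (X Y Z S : Set V)
    (hXY : Disjoint X Y) (hXZ : Disjoint X Z) (hXS : Disjoint X S)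
    (hYZ : Disjoint Y Z) (hYS : Disjoint Y S) (hZS : Disjoint Z S)
    (hZ : Z ∩ G.PossDe X = ∅) :
    CondAdj.CondAdjCrit G X Y Z S ↔ CondAdj.AdjCrit G X Y (S ∪ Z) :=
  condAdjCrit_iff_adjCrit_mpdag_general G hG X Y Z S hZ
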